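/- The closed imaginary cone I of a Coxeter system is contained in the nonnegative span of the simple roots: I ⊆ R_{≥0}Λ. -/

import Mathlib

noncomputable def coxEntry {B : Type*} (M : CoxeterMatrix B) (s t : B) : ℝ :=
  if M s t = 0 then -2 else -2 * Real.cos (Real.pi / (M s t))

noncomputable def coxForm {B : Type*} [Fintype B] (M : CoxeterMatrix B) (v w : B → ℝ) : ℝ :=
  ∑ s, ∑ t, v s * w t * coxEntry M s t

/-- The simple root `α_s` in `RΛ ≅ (B → ℝ)`. -/
noncomputable def simpleRoot {B : Type*} [DecidableEq B] (s : B) : B → ℝ := Pi.single s 1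

/-- The set of real roots: the `W`-orbit of the simple roots under the Tits representation. -/
def rootSet {B : Type*} [DecidableEq B] {W : Type*} [Group W]
    (ρ : W →* ((B → ℝ) ≃ₗ[ℝ] (B → ℝ))) : Set (B → ℝ) :=
  {v | ∃ (w : W) (s : B), v = ρ w (simpleRoot s)}

/-- The set of positive real roots. -/
def posRootSet {B : Type*} [DecidableEq B] {W : Type*} [Group W]
    (ρ : W →* ((B → ℝ) ≃ₗ[ℝ] (B → ℝ))) : Set (B → ℝ) :=
  {v ∈ rootSet ρ | ∀ i, 0 ≤ v i}

/-- The set `K = {v ∈ ℝ_{≥0}Λ : B(v, α_s) ≤ 0 for all s}`. -/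
noncomputable def coneK {B : Type*} [Fintype B] [DecidableEq B] (M : CoxeterMatrix B) :
    Set (B → ℝ) :=
  {v | (∀ i, 0 ≤ v i) ∧ ∀ s, coxForm M v (simpleRoot s) ≤ 0}

/-- The closed imaginary cone `I = closure (W · K)`. -/
noncomputable def imagCone {B : Type*} [Fintype B] [DecidableEq B] (M : CoxeterMatrix B)
    {W : Type*} [Group W] (ρ : W →* ((B → ℝ) ≃ₗ[ℝ] (B → ℝ))) : Set (B → ℝ) :=
  closure {v | ∃ (w : W), ∃ k ∈ coneK M, v = ρ w k}

/-!
Root positivity drives the proof: if `ℓ(w s) > ℓ(w)` then `w α_s ≥ 0`. For `w ≠ 1` pick a right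
descent `t`; writing `w = y · (⋯ s t)` with the alternating word as long as possible, `y` has both
`s` and `t` as ascents, and in the dihedral group `⟨s, t⟩` the root `(⋯ s t) α_s` has coefficients
`sin (j π / m) / sin (π / m) ≥ 0` (with `j ≤ m`, since `(⋯ s t) s` stays reduced). Now for `v ∈ K`
and `ℓ(w s) > ℓ(w)`, `ws · v = w v - B(α_s, v) · w α_s ≥ w v`, so `W · K ≥ 0`; the nonnegative
orthant is closed, so it contains `I`.
-/

open CoxeterSystem

lemma simpleRoot_nonneg {B : Type*} [DecidableEq B] (s : B) : 0 ≤ simpleRoot s := by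
  simp [simpleRoot, Pi.single_nonneg]

section Form

variable {B : Type*} (M : CoxeterMatrix B)

lemma coxEntry_comm (s t : B) : coxEntry M s t = coxEntry M t s := by
  rw [coxEntry, coxEntry, M.symmetric]

lemma coxEntry_self (s : B) : coxEntry M s s = 2 := by
  simp [coxEntry, Real.cos_pi]

variable [Fintype B]

lemma coxForm_comm (v w : B → ℝ) : coxForm M v w = coxForm M w v := by
  rw [coxForm, coxForm, Finset.sum_comm]
  refine Finset.sum_congr rfl fun t _ ↦ Finset.sum_congr rfl fun s _ ↦ ?_
  rw [coxEntry_comm]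
  ring

variable [DecidableEq B]

lemma coxForm_simpleRoot_simpleRoot (s t : B) :
    coxForm M (simpleRoot s) (simpleRoot t) = coxEntry M s t := by
  simp [coxForm, simpleRoot, Pi.single_apply]

end Form

/-- `sin (j π / m) / sin (π / m) = U_{j-1}(cos (π / m))`, with its limit `j` at `m = 0` (meaning
`m = ∞`): the coefficients of `(⋯ s t) α_s` on `α_s, α_t` in the dihedral group of order `2m`. -/
noncomputable def dihedralCoeff (m j : ℕ) : ℝ :=
  if m = 0 then j else Real.sin (j * (Real.pi / m)) / Real.sin (Real.pi / m)

lemma dihedralCoeff_zero (m : ℕ) : dihedralCoeff m 0 = 0 := by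
  simp [dihedralCoeff]

lemma dihedralCoeff_one {m : ℕ} (hm : m ≠ 1) : dihedralCoeff m 1 = 1 := by
  rcases eq_or_ne m 0 with rfl | hm0
  · simp [dihedralCoeff]
  have hsin : Real.sin (Real.pi / m) ≠ 0 := by
    refine (Real.sin_pos_of_pos_of_lt_pi (by positivity) ?_).ne'
    exact div_lt_self Real.pi_pos (by norm_cast; omega)
  simp [dihedralCoeff, hm0, hsin]

lemma dihedralCoeff_nonneg {m j : ℕ} (h : m = 0 ∨ j ≤ m) : 0 ≤ dihedralCoeff m j := by
  rcases eq_or_ne m 0 with rfl | hm0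
  · simp [dihedralCoeff]
  have hjm : (j : ℝ) ≤ m := by exact_mod_cast h.resolve_left hm0
  have hm : (0 : ℝ) < m := by positivity
  unfold dihedralCoeff
  rw [if_neg hm0]
  refine div_nonneg (Real.sin_nonneg_of_nonneg_of_le_pi (by positivity) ?_)
    (Real.sin_nonneg_of_nonneg_of_le_pi (by positivity) (div_le_self Real.pi_pos.le ?_))
  · calc (j : ℝ) * (Real.pi / m) ≤ m * (Real.pi / m) := by gcongr
      _ = Real.pi := by field_simp
  · exact_mod_cast Nat.one_le_iff_ne_zero.mpr hm0

lemma dihedralCoeff_add_two {B : Type*} (M : CoxeterMatrix B) (s t : B) (j : ℕ) :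
    dihedralCoeff (M s t) (j + 2) =
      -coxEntry M s t * dihedralCoeff (M s t) (j + 1) - dihedralCoeff (M s t) j := by
  unfold dihedralCoeff coxEntry
  split_ifs with hm
  · push_cast; ring
  · have key : ∀ θ : ℝ, Real.sin ((j + 2 : ℕ) * θ) =
        2 * Real.cos θ * Real.sin ((j + 1 : ℕ) * θ) - Real.sin (j * θ) := fun θ ↦ by
      push_cast
      rw [show ((j : ℝ) + 2) * θ = (j + 1) * θ + θ by ring,
        show (j : ℝ) * θ = (j + 1) * θ - θ by ring, Real.sin_add, Real.sin_sub]
      ring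
    rw [key]
    ring

def alternatingLetter {B : Type*} (s t : B) (k : ℕ) : B := if Even k then t else s

section Dihedral

variable {B : Type*} {s t : B}

lemma alternatingWord_succ_eq_cons (k : ℕ) :
    alternatingWord s t (k + 1) = alternatingLetter s t k :: alternatingWord s t k :=
  alternatingWord_succ' s t k

lemma alternatingLetter_add_two (k : ℕ) :
    alternatingLetter s t (k + 2) = alternatingLetter s t k := by
  simp [alternatingLetter, Nat.even_add]

lemma alternatingLetter_succ_and (k : ℕ) :
    alternatingLetter s t k = s ∧ alternatingLetter s t (k + 1) = t ∨
      alternatingLetter s t k = t ∧ alternatingLetter s t (k + 1) = s := by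
  by_cases hk : Even k <;> simp [alternatingLetter, hk, Nat.even_add_one]

lemma coxEntry_alternatingLetter (M : CoxeterMatrix B) (k : ℕ) :
    coxEntry M (alternatingLetter s t k) (alternatingLetter s t (k + 1)) = coxEntry M s t := by
  rcases alternatingLetter_succ_and (s := s) (t := t) k with ⟨h₀, h₁⟩ | ⟨h₀, h₁⟩ <;>
    simp only [h₀, h₁, coxEntry_comm M t s]

lemma alternatingLetter_eq_or (k : ℕ) :
    alternatingLetter s t k = s ∨ alternatingLetter s t k = t := by
  unfold alternatingLetter
  split_ifs <;> simp

end Dihedral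

namespace CoxeterSystem

variable {B : Type*} {M : CoxeterMatrix B} {W : Type*} [Group W] (cs : CoxeterSystem M W)

/-- Peel letters `t, s, t, …` off the right of `w` while they are descents; the process stops at
some `y` for which both `s` and `t` are ascents. -/
theorem exists_ascents_mul_alternatingWord {s t : B} {w x : W} {k : ℕ}
    (hw : w = x * cs.wordProd (alternatingWord s t k)) (hlen : cs.length x + k = cs.length w)
    (hasc : cs.length (x * cs.simple (alternatingLetter s t (k + 1))) = cs.length x + 1) :
    ∃ y j, w = y * cs.wordProd (alternatingWord s t j) ∧ cs.length y + j = cs.length w ∧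
      cs.length y ≤ cs.length x ∧ cs.length (y * cs.simple s) = cs.length y + 1 ∧
      cs.length (y * cs.simple t) = cs.length y + 1 := by
  induction hn : cs.length x using Nat.strong_induction_on generalizing x k with
  | _ n ih =>
  subst hn
  rcases cs.length_mul_simple x (alternatingLetter s t k) with hx | hx
  · refine ⟨x, k, hw, hlen, le_rfl, ?_⟩
    rcases alternatingLetter_succ_and (s := s) (t := t) k with ⟨h₀, h₁⟩ | ⟨h₀, h₁⟩
    · exact ⟨h₀ ▸ hx, h₁ ▸ hasc⟩
    · exact ⟨h₁ ▸ hasc, h₀ ▸ hx⟩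
  · set x₁ := x * cs.simple (alternatingLetter s t k)
    have hx₁ : x₁ * cs.simple (alternatingLetter s t (k + 2)) = x := by
      rw [alternatingLetter_add_two, cs.simple_mul_simple_cancel_right]
    obtain ⟨y, j, hwy, hleny, hyx, hys, hyt⟩ := ih (cs.length x₁) (by omega) (x := x₁) (k := k + 1)
      (by rw [alternatingWord_succ_eq_cons, wordProd_cons, ← mul_assoc,
        cs.simple_mul_simple_cancel_right, hw])
      (by omega) (by rw [hx₁]; omega) rfl
    exact ⟨y, j, hwy, hleny, by omega, hys, hyt⟩

theorem coxeterMatrix_eq_zero_or_le_of_length_mul_alternatingWord {s t : B} {w x : W} {k : ℕ}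
    (hw : w = x * cs.wordProd (alternatingWord s t k)) (hlen : cs.length x + k = cs.length w)
    (hws : cs.length (w * cs.simple s) = cs.length w + 1) : M s t = 0 ∨ k + 1 ≤ M s t := by
  have hprod : cs.wordProd (alternatingWord t s (k + 1)) =
      cs.wordProd (alternatingWord s t k) * cs.simple s := by
    rw [alternatingWord_succ, wordProd_concat]
  have hreduced : cs.IsReduced (alternatingWord t s (k + 1)) := by
    have hle := cs.length_wordProd_le (alternatingWord t s (k + 1))
    have hge := cs.length_mul_le x (cs.wordProd (alternatingWord s t k) * cs.simple s)
    rw [← mul_assoc, ← hw, hws] at hge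
    rw [hprod, length_alternatingWord] at hle
    unfold IsReduced
    rw [hprod, length_alternatingWord]
    omega
  by_contra! h
  exact cs.not_isReduced_alternatingWord t s (M.symmetric t s ▸ h.1) (M.symmetric t s ▸ h.2)
    hreduced

end CoxeterSystem

section Representation

variable {B : Type*} [Fintype B] [DecidableEq B] {M : CoxeterMatrix B} {W : Type*} [Group W]
  {cs : CoxeterSystem M W} {ρ : W →* ((B → ℝ) ≃ₗ[ℝ] (B → ℝ))}

def IsGeometricRepresentation (cs : CoxeterSystem M W) (ρ : W →* ((B → ℝ) ≃ₗ[ℝ] (B → ℝ))) :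
    Prop :=
  ∀ (s : B) (v : B → ℝ), ρ (cs.simple s) v = v - coxForm M (simpleRoot s) v • simpleRoot s

namespace IsGeometricRepresentation

lemma apply_simple_simpleRoot (hρ : IsGeometricRepresentation cs ρ) (r r' : B) :
    ρ (cs.simple r) (simpleRoot r') = simpleRoot r' - coxEntry M r r' • simpleRoot r := by
  rw [hρ, coxForm_simpleRoot_simpleRoot]

lemma apply_alternatingWord_simpleRoot (hρ : IsGeometricRepresentation cs ρ) {s t : B}
    (hst : s ≠ t) (k : ℕ) :
    ρ (cs.wordProd (alternatingWord s t k)) (simpleRoot s) =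
      dihedralCoeff (M s t) (k + 1) • simpleRoot (alternatingLetter s t (k + 1)) +
        dihedralCoeff (M s t) k • simpleRoot (alternatingLetter s t k) := by
  induction k with
  | zero =>
    simp [alternatingWord, alternatingLetter, dihedralCoeff_zero,
      dihedralCoeff_one (M.off_diagonal s t hst)]
  | succ k ih =>
    rw [alternatingWord_succ_eq_cons, wordProd_cons, map_mul, LinearEquiv.mul_apply, ih, map_add,
      map_smul, map_smul, hρ.apply_simple_simpleRoot, hρ.apply_simple_simpleRoot, coxEntry_self,
      coxEntry_alternatingLetter, alternatingLetter_add_two, dihedralCoeff_add_two]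
    module

theorem apply_simpleRoot_nonneg (hρ : IsGeometricRepresentation cs ρ) {w : W} {s : B}
    (hws : cs.length (w * cs.simple s) = cs.length w + 1) : 0 ≤ ρ w (simpleRoot s) := by
  induction hn : cs.length w using Nat.strong_induction_on generalizing w s with
  | _ n ih =>
  subst hn
  rcases eq_or_ne w 1 with rfl | hw1
  · simpa using simpleRoot_nonneg s
  obtain ⟨t, hwt⟩ := cs.exists_rightDescent_of_ne_one hw1
  have hwt : cs.length (w * cs.simple t) + 1 = cs.length w := cs.isRightDescent_iff.mp hwt
  have hst : s ≠ t := by rintro rfl; omega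
  obtain ⟨x, k, hw, hlen, hxw, hxs, hxt⟩ := cs.exists_ascents_mul_alternatingWord (s := s) (t := t)
    (x := w * cs.simple t) (k := 1)
    (by rw [show alternatingWord s t 1 = [t] from rfl, wordProd_singleton,
      cs.simple_mul_simple_cancel_right]) (by omega)
    (by rw [show alternatingLetter s t (1 + 1) = t from if_pos even_two,
      cs.simple_mul_simple_cancel_right]; omega)
  have hroot : ∀ r, r = s ∨ r = t → 0 ≤ ρ x (simpleRoot r) := by
    rintro r (rfl | rfl)
    · exact ih _ (by omega) hxs rfl
    · exact ih _ (by omega) hxt rfl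
  have hcoeff : ∀ j ≤ k + 1, 0 ≤ dihedralCoeff (M s t) j := fun j hj ↦ dihedralCoeff_nonneg <|
    (cs.coxeterMatrix_eq_zero_or_le_of_length_mul_alternatingWord hw hlen hws).imp_right
      hj.trans
  rw [hw, map_mul, LinearEquiv.mul_apply, hρ.apply_alternatingWord_simpleRoot hst, map_add,
    map_smul, map_smul]
  exact add_nonneg (smul_nonneg (hcoeff _ le_rfl) (hroot _ (alternatingLetter_eq_or _)))
    (smul_nonneg (hcoeff _ k.le_succ) (hroot _ (alternatingLetter_eq_or _)))

theorem apply_nonneg_of_mem_coneK (hρ : IsGeometricRepresentation cs ρ) (w : W) {v : B → ℝ}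
    (hv : v ∈ coneK M) : 0 ≤ ρ w v := by
  induction hn : cs.length w using Nat.strong_induction_on generalizing w with
  | _ n ih =>
  subst hn
  rcases eq_or_ne w 1 with rfl | hw1
  · simpa using (show 0 ≤ v from hv.1)
  obtain ⟨t, hwt⟩ := cs.exists_rightDescent_of_ne_one hw1
  have hwt : cs.length (w * cs.simple t) + 1 = cs.length w := cs.isRightDescent_iff.mp hwt
  obtain ⟨x, rfl⟩ : ∃ x, w = x * cs.simple t := ⟨_, (cs.simple_mul_simple_cancel_right t).symm⟩
  rw [cs.simple_mul_simple_cancel_right] at hwt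
  have hform : coxForm M (simpleRoot t) v ≤ 0 := coxForm_comm M v _ ▸ hv.2 t
  have hroot : 0 ≤ ρ x (simpleRoot t) := hρ.apply_simpleRoot_nonneg (by omega)
  calc 0 ≤ ρ x v := ih _ (by omega) x rfl
    _ ≤ ρ x v - coxForm M (simpleRoot t) v • ρ x (simpleRoot t) :=
      (le_sub_self_iff _).mpr (smul_nonpos_of_nonpos_of_nonneg hform hroot)
    _ = ρ (x * cs.simple t) v := by
      rw [map_mul, LinearEquiv.mul_apply, hρ, map_sub, map_smul]

end IsGeometricRepresentation

end Representation

theorem imagCone_subset_nonneg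
    {B : Type*} [Fintype B] [DecidableEq B] (M : CoxeterMatrix B)
    {W : Type*} [Group W] (cs : CoxeterSystem M W)
    (ρ : W →* ((B → ℝ) ≃ₗ[ℝ] (B → ℝ)))
    (hρ : ∀ (s : B) (v : B → ℝ),
      ρ (cs.simple s) v = v - coxForm M (simpleRoot s) v • simpleRoot s) :
    imagCone M ρ ⊆ {v | ∀ i, 0 ≤ v i} := by
  refine closure_minimal ?_ isClosed_Ici
  rintro _ ⟨w, v, hv, rfl⟩
  exact IsGeometricRepresentation.apply_nonneg_of_mem_coneK (cs := cs) hρ w hv
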